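/- (Uniqueness for the stationary MFG) Suppose H is strictly convex and C², g is strictly increasing, and φ > 0 on 𝕋^d. Then the stationary MFG system -u - H(Du) + g(m) - V = 0, m - div(m D_pH(Du)) - φ = 0 on 𝕋^d has at most one solution (m, u) ∈ C²(𝕋^d; ℝ₀⁺) × C¹(𝕋^d). -/

import Mathlib

noncomputable section
open MeasureTheory

/-- Euclidean space `ℝ^d`, the covering space of the torus `𝕋^d`. -/
abbrev Ed (d : ℕ) := Fin d → ℝ

/-- A fundamental domain (unit cube) for the torus `𝕋^d = ℝ^d / ℤ^d`. -/
def cube (d : ℕ) : Set (Ed d) := Set.univ.pi fun _ => Set.Icc (0:ℝ) 1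

/-- `ℤ^d`-periodicity: a function on `ℝ^d` represents a function on the torus `𝕋^d`. -/
def Per {d : ℕ} (u : Ed d → ℝ) : Prop :=
  ∀ (x : Ed d) (m : Fin d → ℤ), u (x + fun i => (m i : ℝ)) = u x

/-- `i`-th partial derivative. -/
def pd {d : ℕ} (i : Fin d) (u : Ed d → ℝ) (x : Ed d) : ℝ :=
  fderiv ℝ u x (Pi.single i 1)

/-- The gradient `Du`. -/
def grad {d : ℕ} (u : Ed d → ℝ) (x : Ed d) : Ed d := fun i => pd i u x

/-- The `i`-th component of the flux `m D_pH(Du)`. -/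
def flux {d : ℕ} (H : Ed d → ℝ) (m u : Ed d → ℝ) (i : Fin d) (y : Ed d) : ℝ :=
  m y * pd i H (grad u y)

/-- The divergence `div(m D_pH(Du))`. -/
def divFlux {d : ℕ} (H : Ed d → ℝ) (m u : Ed d → ℝ) (x : Ed d) : ℝ :=
  ∑ i, pd i (flux H m u i) x

/-- First component of the MFG operator: `-u - H(Du) + g(m) - V`. -/
def F1 {d : ℕ} (H : Ed d → ℝ) (g : ℝ → ℝ) (V : Ed d → ℝ) (m u : Ed d → ℝ) (x : Ed d) : ℝ :=
  -(u x) - H (grad u x) + g (m x) - V x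

/-- Second component of the MFG operator: `m - div(m D_pH(Du)) - φ`. -/
def F2 {d : ℕ} (H : Ed d → ℝ) (φ : Ed d → ℝ) (m u : Ed d → ℝ) (x : Ed d) : ℝ :=
  m x - divFlux H m u x - φ x

/-!
Lasry–Lions monotonicity. For two solutions, the two equations turn the divergence of the periodic
field `(u₁ - u₂)(m₁ D_pH(Du₁) - m₂ D_pH(Du₂))` into
`m₁ B(Du₁, Du₂) + m₂ B(Du₂, Du₁) + (m₁ - m₂)(g(m₁) - g(m₂))`, where `B` is the Bregman divergence
of `H`. All three terms are nonnegative while the integral of a divergence over a period cell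
vanishes, so the (continuous) sum vanishes identically. Since `m₁ > 0` (at a zero of `m₁`, a
minimum, the flux is stationary and the Fokker–Planck equation would give `φ = 0`), strict
convexity of `H` and strict monotonicity of `g` give `Du₁ = Du₂` and `m₁ = m₂`, and then the
Hamilton–Jacobi equation gives `u₁ = u₂`.
-/

open Set Filter Topology Asymptotics

section Monotonicity

variable {E : Type*} [NormedAddCommGroup E] [NormedSpace ℝ E]

theorem HasFDerivAt.mul_continuousAt_of_eq_zero {f g : E → ℝ} {x : E}
    (hf : HasFDerivAt f (0 : E →L[ℝ] ℝ) x) (hfx : f x = 0) (hg : ContinuousAt g x) :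
    HasFDerivAt (fun y => f y * g y) (0 : E →L[ℝ] ℝ) x := by
  rw [hasFDerivAt_iff_isLittleO] at hf ⊢
  simp only [hfx, sub_zero, zero_apply, zero_mul] at hf ⊢
  have hfg : (fun y => f y * g y) =O[𝓝 x] f := by
    simpa using (isBigO_refl f (𝓝 x)).mul (hg.tendsto.isBigO_one ℝ)
  exact hfg.trans_isLittleO hf

def bregman (f : E → ℝ) (p q : E) : ℝ :=
  f q - f p - fderiv ℝ f p (q - p)

lemma StrictConvexOn.comp_line {f : E → ℝ} (hf : StrictConvexOn ℝ univ f) (p : E) {v : E}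
    (hv : v ≠ 0) : StrictConvexOn ℝ univ fun t : ℝ => f (p + t • v) := by
  refine ⟨convex_univ, fun s _ t _ hst a b ha hb hab => ?_⟩
  have hne : p + s • v ≠ p + t • v := by
    simpa using (smul_left_injective ℝ hv).ne hst
  have hcomb : p + (a • s + b • t) • v = a • (p + s • v) + b • (p + t • v) := by
    calc p + (a • s + b • t) • v = (a + b) • p + (a • s + b • t) • v := by rw [hab, one_smul]
      _ = _ := by module
  simpa only [hcomb] using hf.2 trivial trivial hne ha hb hab

lemma bregman_pos {f : E → ℝ} (hf : StrictConvexOn ℝ univ f) {p q : E}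
    (hfp : DifferentiableAt ℝ f p) (hpq : p ≠ q) : 0 < bregman f p q := by
  have hline : HasDerivAt (fun t : ℝ => f (p + t • (q - p))) (fderiv ℝ f p (q - p)) 0 := by
    have := ((hasDerivAt_id (0 : ℝ)).smul_const (q - p)).const_add p
    simp only [id, one_smul] at this
    exact hfp.hasFDerivAt.comp_hasDerivAt_of_eq 0 this (by simp)
  have := (hf.comp_line p (sub_ne_zero.2 hpq.symm)).lt_slope_of_hasDerivAt trivial trivial
    zero_lt_one hline
  simp only [slope_def_field, sub_zero, div_one, zero_smul, add_zero, one_smul,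
    add_sub_cancel] at this
  rw [bregman]
  linarith

lemma bregman_nonneg {f : E → ℝ} (hf : StrictConvexOn ℝ univ f) {p : E}
    (hfp : DifferentiableAt ℝ f p) (q : E) : 0 ≤ bregman f p q := by
  rcases eq_or_ne p q with rfl | hpq
  · simp [bregman]
  · exact (bregman_pos hf hfp hpq).le

lemma StrictMonoOn.sub_mul_sub_pos {s : Set ℝ} {g : ℝ → ℝ} (hg : StrictMonoOn g s) {a b : ℝ}
    (ha : a ∈ s) (hb : b ∈ s) (hab : a ≠ b) : 0 < (a - b) * (g a - g b) := by
  rcases hab.lt_or_gt with h | h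
  · exact mul_pos_of_neg_of_neg (sub_neg.2 h) (sub_neg.2 (hg ha hb h))
  · exact mul_pos (sub_pos.2 h) (sub_pos.2 (hg hb ha h))

lemma StrictMonoOn.sub_mul_sub_nonneg {s : Set ℝ} {g : ℝ → ℝ} (hg : StrictMonoOn g s) {a b : ℝ}
    (ha : a ∈ s) (hb : b ∈ s) : 0 ≤ (a - b) * (g a - g b) := by
  rcases eq_or_ne a b with rfl | hab
  · simp
  · exact (hg.sub_mul_sub_pos ha hb hab).le

def lasryLionsDefect (H : E → ℝ) (g : ℝ → ℝ) (a b : ℝ) (p q : E) : ℝ :=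
  a * bregman H p q + b * bregman H q p + (a - b) * (g a - g b)

variable {H : E → ℝ} {g : ℝ → ℝ} {a b : ℝ} {p q : E}

lemma lasryLionsDefect_nonneg (hH : StrictConvexOn ℝ univ H) (hp : DifferentiableAt ℝ H p)
    (hq : DifferentiableAt ℝ H q) (hg : StrictMonoOn g (Ici 0)) (ha : 0 ≤ a) (hb : 0 ≤ b) :
    0 ≤ lasryLionsDefect H g a b p q :=
  add_nonneg (add_nonneg (mul_nonneg ha (bregman_nonneg hH hp q))
    (mul_nonneg hb (bregman_nonneg hH hq p))) (hg.sub_mul_sub_nonneg ha hb)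

lemma eq_of_lasryLionsDefect_eq_zero (hH : StrictConvexOn ℝ univ H) (hp : DifferentiableAt ℝ H p)
    (hq : DifferentiableAt ℝ H q) (hg : StrictMonoOn g (Ici 0)) (ha : 0 < a) (hb : 0 ≤ b)
    (h : lasryLionsDefect H g a b p q = 0) : p = q ∧ a = b := by
  have hA := mul_nonneg ha.le (bregman_nonneg hH hp q)
  have hB := mul_nonneg hb (bregman_nonneg hH hq p)
  have hC := hg.sub_mul_sub_nonneg ha.le hb
  rw [lasryLionsDefect] at h
  constructor
  · by_contra hpq
    have := mul_pos ha (bregman_pos hH hp hpq)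
    linarith
  · by_contra hab
    have := hg.sub_mul_sub_pos ha.le hb hab
    linarith

end Monotonicity

section Torus

variable {d : ℕ}

lemma cube_eq_Icc : cube d = Icc 0 1 := by
  rw [cube, ← pi_univ_Icc]
  rfl

lemma measurableSet_cube : MeasurableSet (cube d) :=
  cube_eq_Icc (d := d) ▸ measurableSet_Icc

lemma Continuous.integrableOn_cube {f : Ed d → ℝ} (hf : Continuous f) :
    IntegrableOn f (cube d) :=
  cube_eq_Icc (d := d) ▸ hf.continuousOn.integrableOn_compact isCompact_Icc

lemma cube_subset_closure_interior : cube d ⊆ closure (interior (cube d)) := by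
  rw [cube, interior_pi_set finite_univ, closure_pi_set]
  intro x hx i _
  simpa [closure_Ioo zero_ne_one] using hx i trivial

lemma exists_add_intCast_mem_cube (x : Ed d) :
    ∃ n : Fin d → ℤ, (x + fun i => (n i : ℝ)) ∈ cube d := by
  refine ⟨fun i => -⌊x i⌋, fun i _ => ?_⟩
  have hfract : x i + ((-⌊x i⌋ : ℤ) : ℝ) = Int.fract (x i) := by
    rw [Int.fract]; push_cast; ring
  simp only [Pi.add_apply, hfract]
  exact ⟨Int.fract_nonneg _, (Int.fract_lt_one _).le⟩

lemma Per.eq_of_eqOn_cube {f g : Ed d → ℝ} (hf : Per f) (hg : Per g) (h : EqOn f g (cube d)) :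
    f = g := by
  funext x
  obtain ⟨n, hn⟩ := exists_add_intCast_mem_cube x
  rw [← hf x n, ← hg x n]
  exact h hn

lemma Per.sub {f g : Ed d → ℝ} (hf : Per f) (hg : Per g) : Per fun x => f x - g x :=
  fun x n => by simp only [hf x n, hg x n]

lemma Per.mul {f g : Ed d → ℝ} (hf : Per f) (hg : Per g) : Per fun x => f x * g x :=
  fun x n => by simp only [hf x n, hg x n]

lemma Per.grad_add_intCast {f : Ed d → ℝ} (hf : Per f) (x : Ed d) (n : Fin d → ℤ) :
    grad f (x + fun i => (n i : ℝ)) = grad f x := by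
  have hshift : (fun y => f (y + fun i => (n i : ℝ))) = f := funext fun y => hf y n
  funext i
  rw [grad, grad, pd, pd, ← fderiv_comp_add_right, hshift]

lemma Per.flux {H m u : Ed d → ℝ} (hm : Per m) (hu : Per u) (i : Fin d) :
    Per (flux H m u i) :=
  fun x n => by rw [_root_.flux, _root_.flux, hm x n, hu.grad_add_intCast x n]

lemma Fin.insertNth_one_eq_insertNth_zero_add {n : ℕ} (i : Fin (n + 1)) (y : Fin n → ℝ) :
    i.insertNth (1 : ℝ) y =
      i.insertNth 0 y + fun j => ((Pi.single i 1 : Fin (n + 1) → ℤ) j : ℝ) := by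
  funext j
  rcases eq_or_ne j i with rfl | hj
  · simp
  · obtain ⟨k, rfl⟩ := Fin.exists_succAbove_eq hj
    simp [Fin.insertNth_apply_succAbove, Pi.single_apply, Fin.succAbove_ne i k]

lemma continuous_pd {f : Ed d → ℝ} (hf : ContDiff ℝ 1 f) (i : Fin d) : Continuous (pd i f) :=
  (hf.continuous_fderiv one_ne_zero).clm_apply continuous_const

lemma continuous_grad {f : Ed d → ℝ} (hf : ContDiff ℝ 1 f) : Continuous (grad f) :=
  continuous_pi fun i => continuous_pd hf i

/-- The torus has no boundary: opposite faces of the cube cancel in the divergence theorem. -/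
lemma integral_cube_divergence_eq_zero (X : Fin d → Ed d → ℝ) (hX : ∀ i, ContDiff ℝ 1 (X i))
    (hXper : ∀ i, Per (X i)) : ∫ x in cube d, ∑ i, pd i (X i) x = 0 := by
  cases d with
  | zero => simp
  | succ n =>
    have hInt : IntegrableOn (fun x => ∑ i, pd i (X i) x) (Icc 0 1) :=
      cube_eq_Icc ▸ (continuous_finsetSum _ fun i _ => continuous_pd (hX i) i).integrableOn_cube
    rw [cube_eq_Icc]
    change ∫ x in Icc 0 1, ∑ i, fderiv ℝ (X i) x (Pi.single i 1) = 0
    rw [integral_divergence_of_hasFDerivAt_off_countable' 0 1 zero_le_one X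
      (fun i x => fderiv ℝ (X i) x) ∅ countable_empty (fun i => (hX i).continuous.continuousOn)
      (fun x _ i => ((hX i).differentiable one_ne_zero x).hasFDerivAt) hInt]
    refine Finset.sum_eq_zero fun i _ => sub_eq_zero.2 (setIntegral_congr_fun
      measurableSet_Icc fun y _ => ?_)
    change X i (i.insertNth 1 y) = X i (i.insertNth 0 y)
    rw [Fin.insertNth_one_eq_insertNth_zero_add]
    exact hXper i _ _

lemma eqOn_cube_zero_of_integral_eq_zero {f : Ed d → ℝ} (hf : Continuous f)
    (hnn : ∀ x ∈ cube d, 0 ≤ f x) (hint : ∫ x in cube d, f x = 0) : EqOn f 0 (cube d) := by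
  have hae := (setIntegral_eq_zero_iff_of_nonneg_ae
    (ae_restrict_of_forall_mem measurableSet_cube hnn) hf.integrableOn_cube).1 hint
  exact Measure.eqOn_of_ae_eq hae hf.continuousOn continuousOn_const cube_subset_closure_interior

end Torus

section MFG

variable {d : ℕ} {H : Ed d → ℝ}

lemma pd_sub {f g : Ed d → ℝ} {x : Ed d} (hf : DifferentiableAt ℝ f x)
    (hg : DifferentiableAt ℝ g x) (i : Fin d) :
    pd i (fun y => f y - g y) x = pd i f x - pd i g x := by
  simp only [pd, fderiv_fun_sub hf hg, sub_apply]

lemma pd_mul {f g : Ed d → ℝ} {x : Ed d} (hf : DifferentiableAt ℝ f x)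
    (hg : DifferentiableAt ℝ g x) (i : Fin d) :
    pd i (fun y => f y * g y) x = pd i f x * g x + f x * pd i g x := by
  simp only [pd, fderiv_fun_mul hf hg, add_apply, smul_apply, smul_eq_mul]
  ring

lemma sum_mul_flux (m u : Ed d → ℝ) (x v : Ed d) :
    ∑ i, v i * flux H m u i x = m x * fderiv ℝ H (grad u x) v := by
  conv_rhs => rw [pi_eq_sum_univ' v]
  simp only [map_sum, map_smul, smul_eq_mul, Finset.mul_sum, flux, pd]
  exact Finset.sum_congr rfl fun i _ => by ring

lemma pos_of_F2_eq_zero {φ m u : Ed d → ℝ} (hH : ContDiff ℝ 1 H) (hm : Differentiable ℝ m)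
    (hmnn : ∀ x, 0 ≤ m x) (hu : ContDiff ℝ 1 u) (hφ : ∀ x, 0 < φ x)
    (heq : ∀ x, F2 H φ m u x = 0) (x : Ed d) : 0 < m x := by
  refine (hmnn x).lt_of_ne fun hx => ?_
  have hmin : IsLocalMin m x := Eventually.of_forall fun y => hx ▸ hmnn y
  have hm' : HasFDerivAt m (0 : Ed d →L[ℝ] ℝ) x := by
    rw [← hmin.fderiv_eq_zero]
    exact (hm x).hasFDerivAt
  have hdiv : divFlux H m u x = 0 := Finset.sum_eq_zero fun i _ => by
    have hflux : HasFDerivAt (flux H m u i) 0 x := hm'.mul_continuousAt_of_eq_zero hx.symm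
      ((continuous_pd hH i).comp (continuous_grad hu)).continuousAt
    rw [pd, hflux.fderiv, zero_apply]
  have hF2 := heq x
  rw [F2, hdiv, ← hx] at hF2
  linarith [hφ x]

lemma sum_pd_flux_eq {φ m u : Ed d → ℝ} (heq : ∀ x, F2 H φ m u x = 0) (x : Ed d) :
    ∑ i, pd i (flux H m u i) x = m x - φ x := by
  have := heq x
  rw [F2, divFlux] at this
  linarith

lemma lasryLionsDefect_eq_sum_pd {g : ℝ → ℝ} {V φ m₁ u₁ m₂ u₂ : Ed d → ℝ}
    (hu₁ : Differentiable ℝ u₁) (hu₂ : Differentiable ℝ u₂)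
    (hflux₁ : ∀ i, Differentiable ℝ (flux H m₁ u₁ i))
    (hflux₂ : ∀ i, Differentiable ℝ (flux H m₂ u₂ i))
    (heq1₁ : ∀ x, F1 H g V m₁ u₁ x = 0) (heq2₁ : ∀ x, F2 H φ m₁ u₁ x = 0)
    (heq1₂ : ∀ x, F1 H g V m₂ u₂ x = 0) (heq2₂ : ∀ x, F2 H φ m₂ u₂ x = 0) (x : Ed d) :
    lasryLionsDefect H g (m₁ x) (m₂ x) (grad u₁ x) (grad u₂ x) =
      ∑ i, pd i (fun y => (u₁ y - u₂ y) * (flux H m₁ u₁ i y - flux H m₂ u₂ i y)) x := by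
  have hpd : ∀ i, pd i (fun y => (u₁ y - u₂ y) * (flux H m₁ u₁ i y - flux H m₂ u₂ i y)) x =
      (grad u₁ x - grad u₂ x) i * (flux H m₁ u₁ i x - flux H m₂ u₂ i x) +
        (u₁ x - u₂ x) * (pd i (flux H m₁ u₁ i) x - pd i (flux H m₂ u₂ i) x) := fun i => by
    rw [pd_mul ((hu₁ x).fun_sub (hu₂ x)) ((hflux₁ i x).fun_sub (hflux₂ i x)),
      pd_sub (hu₁ x) (hu₂ x), pd_sub (hflux₁ i x) (hflux₂ i x)]
    rfl
  have e₁ := heq1₁ x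
  have e₂ := heq1₂ x
  rw [F1] at e₁ e₂
  rw [Finset.sum_congr rfl fun i _ => hpd i]
  simp only [Finset.sum_add_distrib, ← Finset.mul_sum, mul_sub, Finset.sum_sub_distrib,
    sum_mul_flux, sum_pd_flux_eq heq2₁, sum_pd_flux_eq heq2₂]
  rw [lasryLionsDefect, bregman, bregman, ← neg_sub (grad u₁ x) (grad u₂ x), map_neg]
  linear_combination (m₁ x - m₂ x) * (e₁ - e₂)

end MFG

theorem stationary_MFG_uniqueness_general {d : ℕ}
    (H : Ed d → ℝ) (g : ℝ → ℝ) (V φ : Ed d → ℝ)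
    (hH : ContDiff ℝ 2 H) (hHconv : StrictConvexOn ℝ Set.univ H)
    (hgmono : StrictMonoOn g (Set.Ici 0))
    (hφpos : ∀ x, 0 < φ x)
    (m₁ u₁ m₂ u₂ : Ed d → ℝ)
    (hm₁ : ContDiff ℝ 2 m₁) (hm₁per : Per m₁) (hm₁nn : ∀ x, 0 ≤ m₁ x)
    (hu₁ : ContDiff ℝ 1 u₁) (hu₁per : Per u₁)
    (hflux₁ : ∀ i, ContDiff ℝ 1 (flux H m₁ u₁ i))
    (heq1₁ : ∀ x, F1 H g V m₁ u₁ x = 0)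
    (heq2₁ : ∀ x, F2 H φ m₁ u₁ x = 0)
    (hm₂per : Per m₂) (hm₂nn : ∀ x, 0 ≤ m₂ x)
    (hu₂ : ContDiff ℝ 1 u₂) (hu₂per : Per u₂)
    (hflux₂ : ∀ i, ContDiff ℝ 1 (flux H m₂ u₂ i))
    (heq1₂ : ∀ x, F1 H g V m₂ u₂ x = 0)
    (heq2₂ : ∀ x, F2 H φ m₂ u₂ x = 0) :
    m₁ = m₂ ∧ u₁ = u₂ := by
  have hHd : Differentiable ℝ H := hH.differentiable two_ne_zero
  set Y : Fin d → Ed d → ℝ := fun i y => (u₁ y - u₂ y) * (flux H m₁ u₁ i y - flux H m₂ u₂ i y)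
  have hY : ∀ i, ContDiff ℝ 1 (Y i) := fun i => (hu₁.sub hu₂).mul ((hflux₁ i).sub (hflux₂ i))
  have hYper : ∀ i, Per (Y i) := fun i =>
    (hu₁per.sub hu₂per).mul ((hm₁per.flux hu₁per i).sub (hm₂per.flux hu₂per i))
  have hdefect := lasryLionsDefect_eq_sum_pd (hu₁.differentiable one_ne_zero)
    (hu₂.differentiable one_ne_zero) (fun i => (hflux₁ i).differentiable one_ne_zero)
    (fun i => (hflux₂ i).differentiable one_ne_zero) heq1₁ heq2₁ heq1₂ heq2₂
  have hdiv : EqOn (fun x => ∑ i, pd i (Y i) x) 0 (cube d) :=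
    eqOn_cube_zero_of_integral_eq_zero (continuous_finsetSum _ fun i _ => continuous_pd (hY i) i)
      (fun x _ => hdefect x ▸
        lasryLionsDefect_nonneg hHconv (hHd _) (hHd _) hgmono (hm₁nn x) (hm₂nn x))
      (integral_cube_divergence_eq_zero Y hY hYper)
  have hm₁pos := pos_of_F2_eq_zero (hH.of_le one_le_two) (hm₁.differentiable two_ne_zero)
    hm₁nn hu₁ hφpos heq2₁
  have hcube : ∀ x ∈ cube d, grad u₁ x = grad u₂ x ∧ m₁ x = m₂ x := fun x hx =>
    eq_of_lasryLionsDefect_eq_zero hHconv (hHd _) (hHd _) hgmono (hm₁pos x) (hm₂nn x)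
      ((hdefect x).trans (hdiv hx))
  have hm : m₁ = m₂ := hm₁per.eq_of_eqOn_cube hm₂per fun x hx => (hcube x hx).2
  refine ⟨hm, hu₁per.eq_of_eqOn_cube hu₂per fun x hx => ?_⟩
  have e₁ := heq1₁ x
  have e₂ := heq1₂ x
  rw [F1, (hcube x hx).1, hm] at e₁
  rw [F1] at e₂
  linarith

/-- Uniqueness for the stationary MFG: if `H` is strictly convex and `C²`, `g` is
strictly increasing, and `φ > 0` on `𝕋^d`, then the system
`-u - H(Du) + g(m) - V = 0`, `m - div(m D_pH(Du)) - φ = 0` has at most one solution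
`(m,u) ∈ C²(𝕋^d;ℝ₀⁺) × C¹(𝕋^d)`. -/
theorem stationary_MFG_uniqueness {d : ℕ}
    (H : Ed d → ℝ) (g : ℝ → ℝ) (V φ : Ed d → ℝ)
    (hH : ContDiff ℝ 2 H) (hHconv : StrictConvexOn ℝ Set.univ H)
    (hgc : ContinuousOn g (Set.Ici 0)) (hgmono : StrictMonoOn g (Set.Ici 0))
    (hV : Continuous V) (hVper : Per V)
    (hφ : Continuous φ) (hφper : Per φ) (hφpos : ∀ x, 0 < φ x)
    (m₁ u₁ m₂ u₂ : Ed d → ℝ)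
    (hm₁ : ContDiff ℝ 2 m₁) (hm₁per : Per m₁) (hm₁nn : ∀ x, 0 ≤ m₁ x)
    (hu₁ : ContDiff ℝ 1 u₁) (hu₁per : Per u₁)
    (hflux₁ : ∀ i, ContDiff ℝ 1 (flux H m₁ u₁ i))
    (heq1₁ : ∀ x, F1 H g V m₁ u₁ x = 0)
    (heq2₁ : ∀ x, F2 H φ m₁ u₁ x = 0)
    (hm₂ : ContDiff ℝ 2 m₂) (hm₂per : Per m₂) (hm₂nn : ∀ x, 0 ≤ m₂ x)
    (hu₂ : ContDiff ℝ 1 u₂) (hu₂per : Per u₂)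
    (hflux₂ : ∀ i, ContDiff ℝ 1 (flux H m₂ u₂ i))
    (heq1₂ : ∀ x, F1 H g V m₂ u₂ x = 0)
    (heq2₂ : ∀ x, F2 H φ m₂ u₂ x = 0) :
    m₁ = m₂ ∧ u₁ = u₂ :=
  stationary_MFG_uniqueness_general H g V φ hH hHconv hgmono hφpos m₁ u₁ m₂ u₂ hm₁ hm₁per hm₁nn hu₁
    hu₁per hflux₁ heq1₁ heq2₁ hm₂per hm₂nn hu₂ hu₂per hflux₂ heq1₂ heq2₂
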